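/- arXiv:2009.12093 — 4 statements merged into one kernel-verified Lean document; each statement's English description precedes it below -/
import Mathlib

section
/- Let (x*, π*) be an optimal primal solution and optimal dual prices of the single-period multi-carrier market clearing LP with conversion orders. Then for each conversion order co from carrier c1 to c2 with efficiency η, conversion price P, and acceptance variable x_co ∈ [0,1]: if η·π*_{c2} − π*_{c1} − P > 0 then x*_co = 1; if η·π*_{c2} − π*_{c1} − P < 0 then x*_co = 0. -/
/-!
At the primal optimum the balance terms vanish, so the dual bound says that `x*` maximizes the
Lagrangian at `π*` over the box `[0,1]^n`. Relaxing the balance constraints makes the Lagrangian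
separable: the coefficient of `Qco co * xc co` is the marginal profit `η π*_{c2} − π*_{c1} − P`.
Moving only `xc co` inside `[0,1]` therefore shows that `xc co` maximizes a linear function of
that slope on `[0,1]`, which pins it to the endpoint the sign of the slope dictates.
-/

open Finset

section MultiCarrierConversion

variable {C O CO : Type*} [Fintype C] [Fintype O] [Fintype CO] [DecidableEq C]

/-- Total welfare: elementary order welfare minus conversion costs. -/
def convWelfare (oc : O → C) (P Q : O → ℝ) (Qco Pco : CO → ℝ)
    (xo : O → ℝ) (xc : CO → ℝ) : ℝ :=
  ∑ o, P o * Q o * xo o - ∑ co, Pco co * Qco co * xc co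

/-- Left-hand side of the balance constraint of carrier `c1`. -/
def convBalance (oc : O → C) (Q : O → ℝ) (src dst : CO → C) (Qco eta : CO → ℝ)
    (xo : O → ℝ) (xc : CO → ℝ) (c1 : C) : ℝ :=
  ∑ o ∈ univ.filter (fun o => oc o = c1), Q o * xo o
  + ∑ co ∈ univ.filter (fun co => src co = c1), Qco co * xc co
  - ∑ co ∈ univ.filter (fun co => dst co = c1), eta co * Qco co * xc co

/-- Lagrangian obtained by relaxing the balance constraints with multipliers `pis`. -/
def convLagrangian (oc : O → C) (P Q : O → ℝ) (src dst : CO → C)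
    (Qco eta Pco : CO → ℝ) (pis : C → ℝ) (xo : O → ℝ) (xc : CO → ℝ) : ℝ :=
  convWelfare oc P Q Qco Pco xo xc
    - ∑ c1, pis c1 * convBalance oc Q src dst Qco eta xo xc c1

theorem sum_mul_sum_fiberwise {ι κ R : Type*} [Fintype ι] [Fintype κ] [DecidableEq κ]
    [CommSemiring R] (g : ι → κ) (f : ι → R) (h : κ → R) :
    ∑ k, h k * ∑ i with g i = k, f i = ∑ i, h (g i) * f i := by
  rw [← sum_fiberwise univ g]
  refine sum_congr rfl fun k _ => ?_
  rw [mul_sum]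
  exact sum_congr rfl fun i hi => by rw [(mem_filter.1 hi).2]

def convMarginalProfit (src dst : CO → C) (eta Pco : CO → ℝ) (pis : C → ℝ) (co : CO) : ℝ :=
  eta co * pis (dst co) - pis (src co) - Pco co

theorem convLagrangian_eq (oc : O → C) (P Q : O → ℝ) (src dst : CO → C)
    (Qco eta Pco : CO → ℝ) (pis : C → ℝ) (xo : O → ℝ) (xc : CO → ℝ) :
    convLagrangian oc P Q src dst Qco eta Pco pis xo xc
      = ∑ o, (P o - pis (oc o)) * (Q o * xo o)
        + ∑ co, convMarginalProfit src dst eta Pco pis co * (Qco co * xc co) := by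
  simp only [convLagrangian, convWelfare, convBalance, convMarginalProfit, mul_add, mul_sub,
    sum_add_distrib, sum_sub_distrib, sum_mul_sum_fiberwise, sub_mul, mul_assoc, mul_left_comm]
  ring

theorem convLagrangian_sub (oc : O → C) (P Q : O → ℝ) (src dst : CO → C)
    (Qco eta Pco : CO → ℝ) (pis : C → ℝ) (xo : O → ℝ) (xc yc : CO → ℝ) :
    convLagrangian oc P Q src dst Qco eta Pco pis xo yc
        - convLagrangian oc P Q src dst Qco eta Pco pis xo xc
      = ∑ co, convMarginalProfit src dst eta Pco pis co * (Qco co * (yc co - xc co)) := by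
  simp only [convLagrangian_eq, mul_sub, sum_sub_distrib]
  ring

theorem convLagrangian_update_sub [DecidableEq CO] (oc : O → C) (P Q : O → ℝ)
    (src dst : CO → C) (Qco eta Pco : CO → ℝ) (pis : C → ℝ) (xo : O → ℝ) (xc : CO → ℝ)
    (co : CO) (t : ℝ) :
    convLagrangian oc P Q src dst Qco eta Pco pis xo (Function.update xc co t)
        - convLagrangian oc P Q src dst Qco eta Pco pis xo xc
      = convMarginalProfit src dst eta Pco pis co * (Qco co * (t - xc co)) := by
  rw [convLagrangian_sub, Fintype.sum_eq_single co fun j hj => by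
    rw [Function.update_of_ne hj, sub_self, mul_zero, mul_zero], Function.update_self]

theorem convLagrangian_eq_convWelfare (oc : O → C) (P Q : O → ℝ) (src dst : CO → C)
    (Qco eta Pco : CO → ℝ) (pis : C → ℝ) (xo : O → ℝ) (xc : CO → ℝ)
    (hbal : ∀ c1, convBalance oc Q src dst Qco eta xo xc c1 = 0) :
    convLagrangian oc P Q src dst Qco eta Pco pis xo xc = convWelfare oc P Q Qco Pco xo xc := by
  simp [convLagrangian, hbal]

theorem eq_one_and_eq_zero_of_forall_mul_sub_nonpos {r q x : ℝ} (hq : 0 < q)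
    (hx : x ∈ Set.Icc (0 : ℝ) 1) (h : ∀ t ∈ Set.Icc (0 : ℝ) 1, r * (q * (t - x)) ≤ 0) :
    (0 < r → x = 1) ∧ (r < 0 → x = 0) := by
  obtain ⟨hx0, hx1⟩ := hx
  refine ⟨fun hr => ?_, fun hr => ?_⟩
  · have := h 1 (Set.right_mem_Icc.2 zero_le_one)
    nlinarith [mul_pos hr hq]
  · have := h 0 (Set.left_mem_Icc.2 zero_le_one)
    nlinarith [mul_pos (neg_pos.2 hr) hq]

theorem stmt_2_general
    (oc : O → C) (P Q : O → ℝ) (src dst : CO → C) (Qco eta Pco : CO → ℝ)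
    (hQco : ∀ co, 0 < Qco co)
    (xo : O → ℝ) (xc : CO → ℝ) (pis : C → ℝ)
    -- primal feasibility
    (hxo : ∀ o, xo o ∈ Set.Icc (0:ℝ) 1) (hxc : ∀ co, xc co ∈ Set.Icc (0:ℝ) 1)
    (hbal : ∀ c1, convBalance oc Q src dst Qco eta xo xc c1 = 0)
    -- dual optimality of π*: the Lagrangian at π* is bounded by the primal optimum
    (hdual : ∀ (yo : O → ℝ) (yc : CO → ℝ),
      (∀ o, yo o ∈ Set.Icc (0:ℝ) 1) → (∀ co, yc co ∈ Set.Icc (0:ℝ) 1) →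
      convLagrangian oc P Q src dst Qco eta Pco pis yo yc
        ≤ convWelfare oc P Q Qco Pco xo xc) :
    ∀ co : CO,
      (0 < eta co * pis (dst co) - pis (src co) - Pco co → xc co = 1) ∧
      (eta co * pis (dst co) - pis (src co) - Pco co < 0 → xc co = 0) := by
  classical
  intro co
  refine eq_one_and_eq_zero_of_forall_mul_sub_nonpos
    (r := convMarginalProfit src dst eta Pco pis co) (hQco co) (hxc co) fun t ht => ?_
  have hyc : ∀ j, Function.update xc co t j ∈ Set.Icc (0:ℝ) 1 :=
    (Function.forall_update_iff xc fun _ y => y ∈ Set.Icc (0:ℝ) 1).2 ⟨ht, fun j _ => hxc j⟩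
  have hmax := hdual xo _ hxo hyc
  rw [← convLagrangian_eq_convWelfare oc P Q src dst Qco eta Pco pis xo xc hbal] at hmax
  linarith [convLagrangian_update_sub oc P Q src dst Qco eta Pco pis xo xc co t]

/-- If `(x*, π*)` is an optimal primal/dual pair of the
single-period multi-carrier market clearing LP with conversion orders, then for
each conversion order `co` from `src co` to `dst co` with efficiency `eta co`,
price `Pco co`: a strictly positive reduced profit `η π*_{c2} − π*_{c1} − P`
forces full acceptance `x*_co = 1`, and a strictly negative one forces full
rejection `x*_co = 0`. -/
theorem stmt_2
    (oc : O → C) (P Q : O → ℝ) (src dst : CO → C) (Qco eta Pco : CO → ℝ)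
    (hQco : ∀ co, 0 < Qco co) (heta : ∀ co, 0 < eta co)
    (xo : O → ℝ) (xc : CO → ℝ) (pis : C → ℝ)
    -- primal feasibility
    (hxo : ∀ o, xo o ∈ Set.Icc (0:ℝ) 1) (hxc : ∀ co, xc co ∈ Set.Icc (0:ℝ) 1)
    (hbal : ∀ c1, convBalance oc Q src dst Qco eta xo xc c1 = 0)
    -- primal optimality
    (hopt : ∀ (yo : O → ℝ) (yc : CO → ℝ),
      (∀ o, yo o ∈ Set.Icc (0:ℝ) 1) → (∀ co, yc co ∈ Set.Icc (0:ℝ) 1) →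
      (∀ c1, convBalance oc Q src dst Qco eta yo yc c1 = 0) →
      convWelfare oc P Q Qco Pco yo yc ≤ convWelfare oc P Q Qco Pco xo xc)
    -- dual optimality of π*: the Lagrangian at π* is bounded by the primal optimum
    (hdual : ∀ (yo : O → ℝ) (yc : CO → ℝ),
      (∀ o, yo o ∈ Set.Icc (0:ℝ) 1) → (∀ co, yc co ∈ Set.Icc (0:ℝ) 1) →
      convLagrangian oc P Q src dst Qco eta Pco pis yo yc
        ≤ convWelfare oc P Q Qco Pco xo xc) :
    ∀ co : CO,
      (0 < eta co * pis (dst co) - pis (src co) - Pco co → xc co = 1) ∧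
      (eta co * pis (dst co) - pis (src co) - Pco co < 0 → xc co = 0) :=
  stmt_2_general oc P Q src dst Qco eta Pco hQco xo xc pis hxo hxc hbal hdual

end MultiCarrierConversion
end

section
/- Given fixed market prices (π^e_t)_{t∈T} obtained as optimal duals of the balance constraints of the market clearing LP with storage orders, any optimal primal solution (x^{in,*}_{s,t}, x^{out,*}_{s,t}, e*_{s,t}) of the market clearing also optimally solves, for each storage order s, the individual profit maximization: maximize Σ_t (−Q^{in}_{s,t}) x^{in}_{s,t} η^{in}_s π^e_t − Σ_t Q^{out}_{s,t} x^{out}_{s,t} (π^e_t + P^{spread}_s) subject to 0 ≤ x^{in}_{s,t}, x^{out}_{s,t} ≤ 1, the storage energy balance e_{s,t} = e_{s,t−1} + Q^{out}_{s,t} x^{out}_{s,t} η^{out}_s + Q^{in}_{s,t} x^{in}_{s,t}, the capacity bound 0 ≤ e_{s,t} ≤ E^{max}_s, and boundary conditions e_{s,0} = e_{s,T} = E^i_s. -/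
open Finset

section Storage

variable {T : ℕ} {O S : Type*} [Fintype O] [Fintype S]

/-- Feasibility of the decisions `(xin, xout, e)` of one storage order:
acceptance ratios in `[0,1]`, storage energy balance (dynamics), capacity
bounds `0 ≤ e ≤ Emax`, and boundary conditions `e_0 = e_T = Ei`. -/
def storageFeasible (Qout Qin : Fin T → ℝ) (etain etaout Emax Ei : ℝ)
    (xin xout : Fin T → ℝ) (e : Fin (T+1) → ℝ) : Prop :=
  (∀ t, xin t ∈ Set.Icc (0:ℝ) 1) ∧ (∀ t, xout t ∈ Set.Icc (0:ℝ) 1) ∧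
  (∀ t : Fin T, e t.succ = e t.castSucc + Qout t * xout t * etaout + Qin t * xin t) ∧
  (∀ t : Fin (T+1), 0 ≤ e t ∧ e t ≤ Emax) ∧
  e 0 = Ei ∧ e (Fin.last T) = Ei

/-- Profit of a storage order at fixed electricity prices `pi`. -/
def storageProfit (Qout Qin : Fin T → ℝ) (etain Pspread : ℝ)
    (pi : Fin T → ℝ) (xin xout : Fin T → ℝ) : ℝ :=
  ∑ t, (-(Qin t)) * xin t * etain * pi t
  - ∑ t, Qout t * xout t * (pi t + Pspread)

/-- Welfare of the market clearing LP with storage orders. -/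
def storageWelfare (P Q : O → Fin T → ℝ) (Qout : S → Fin T → ℝ)
    (Pspread : S → ℝ) (xo : O → Fin T → ℝ) (xout : S → Fin T → ℝ) : ℝ :=
  ∑ t, ∑ o, P o t * Q o t * xo o t
  - ∑ s, ∑ t, Pspread s * Qout s t * xout s t

/-- Violation of the electricity balance constraint at period `t`. -/
def storageBalance (Q : O → Fin T → ℝ) (Qout Qin : S → Fin T → ℝ)
    (etain : S → ℝ) (xo : O → Fin T → ℝ) (xin xout : S → Fin T → ℝ)
    (t : Fin T) : ℝ :=
  ∑ o, Q o t * xo o t + ∑ s, Qout s t * xout s t + ∑ s, Qin s t * xin s t * etain s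

/-! Since the balance residual vanishes at the optimum, dual optimality of `π` says that the
optimum also maximizes the Lagrangian at `π` over all choices that ignore the balance
constraint. The Lagrangian splits into a part depending only on the ordinary orders plus the
sum of the storage profits at `π`, and the storage constraints of different orders are
independent; so changing the decisions of a single storage order `s` shows that its profit
cannot exceed its profit at the optimum. -/

lemma Fintype.sum_update₂_sub_sum {ι α β M : Type*} [Fintype ι] [DecidableEq ι]
    [AddCommGroup M] (f : ι → α → β → M) (x : ι → α) (y : ι → β) (i : ι) (a : α) (b : β) :
    ∑ j, f j (Function.update x i a j) (Function.update y i b j) - ∑ j, f j (x j) (y j)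
      = f i a b - f i (x i) (y i) := by
  rw [Fintype.sum_eq_add_sum_compl i, Fintype.sum_eq_add_sum_compl i (fun j => f j (x j) (y j)),
    Finset.sum_congr rfl fun j hj => by
      rw [Function.update_of_ne (Finset.mem_compl.1 hj ∘ Finset.mem_singleton.2),
        Function.update_of_ne (Finset.mem_compl.1 hj ∘ Finset.mem_singleton.2)]]
  simp only [Function.update_self]
  exact add_sub_add_right_eq_sub _ _ _

lemma storageWelfare_sub_priced_balance (P Q : O → Fin T → ℝ) (Qout Qin : S → Fin T → ℝ)
    (etain Pspread : S → ℝ) (pi : Fin T → ℝ)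
    (xo : O → Fin T → ℝ) (xin xout : S → Fin T → ℝ) :
    storageWelfare P Q Qout Pspread xo xout
        - ∑ t, pi t * storageBalance Q Qout Qin etain xo xin xout t
      = ∑ t, ∑ o, (P o t - pi t) * Q o t * xo o t
        + ∑ s, storageProfit (Qout s) (Qin s) (etain s) (Pspread s) pi (xin s) (xout s) := by
  have hW : storageWelfare P Q Qout Pspread xo xout
      = ∑ t, (∑ o, P o t * Q o t * xo o t - ∑ s, Pspread s * Qout s t * xout s t) := by
    rw [storageWelfare, Finset.sum_comm (s := (univ : Finset S)), Finset.sum_sub_distrib]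
  have hProfit : ∑ s, storageProfit (Qout s) (Qin s) (etain s) (Pspread s) pi (xin s) (xout s)
      = ∑ t, ∑ s, (-Qin s t * xin s t * etain s * pi t - Qout s t * xout s t * (pi t + Pspread s)) := by
    simp only [storageProfit, ← Finset.sum_sub_distrib]
    exact Finset.sum_comm
  rw [hW, hProfit, ← Finset.sum_sub_distrib, ← Finset.sum_add_distrib]
  refine Finset.sum_congr rfl fun t _ => ?_
  have horders : ∑ o, (P o t - pi t) * Q o t * xo o t
      = ∑ o, P o t * Q o t * xo o t - pi t * ∑ o, Q o t * xo o t := by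
    rw [Finset.mul_sum, ← Finset.sum_sub_distrib]
    exact Finset.sum_congr rfl fun o _ => by ring
  have hstorages : ∑ s, (-Qin s t * xin s t * etain s * pi t
        - Qout s t * xout s t * (pi t + Pspread s))
      = -(pi t * ∑ s, Qout s t * xout s t) - pi t * ∑ s, Qin s t * xin s t * etain s
        - ∑ s, Pspread s * Qout s t * xout s t := by
    simp only [Finset.mul_sum, ← Finset.sum_neg_distrib, ← Finset.sum_sub_distrib]
    exact Finset.sum_congr rfl fun s _ => by ring
  rw [storageBalance, horders, hstorages]
  ring

theorem stmt_4_general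
    (P Q : O → Fin T → ℝ) (Qout Qin : S → Fin T → ℝ)
    (etain etaout Pspread Emax Ei : S → ℝ)
    (xo : O → Fin T → ℝ) (xin xout : S → Fin T → ℝ) (e : S → Fin (T+1) → ℝ)
    (pi : Fin T → ℝ)
    -- primal feasibility
    (hxo : ∀ o t, xo o t ∈ Set.Icc (0:ℝ) 1)
    (hst : ∀ s, storageFeasible (Qout s) (Qin s) (etain s) (etaout s)
        (Emax s) (Ei s) (xin s) (xout s) (e s))
    (hbal : ∀ t, storageBalance Q Qout Qin etain xo xin xout t = 0)
    -- dual optimality of π: the Lagrangian at π is bounded by the primal optimum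
    (hdual : ∀ (yo : O → Fin T → ℝ) (yin yout : S → Fin T → ℝ)
        (ee : S → Fin (T+1) → ℝ),
      (∀ o t, yo o t ∈ Set.Icc (0:ℝ) 1) →
      (∀ s, storageFeasible (Qout s) (Qin s) (etain s) (etaout s)
          (Emax s) (Ei s) (yin s) (yout s) (ee s)) →
      storageWelfare P Q Qout Pspread yo yout
          - ∑ t, pi t * storageBalance Q Qout Qin etain yo yin yout t
        ≤ storageWelfare P Q Qout Pspread xo xout) :
    ∀ s : S, ∀ (yin yout : Fin T → ℝ) (ee : Fin (T+1) → ℝ),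
      storageFeasible (Qout s) (Qin s) (etain s) (etaout s)
          (Emax s) (Ei s) yin yout ee →
      storageProfit (Qout s) (Qin s) (etain s) (Pspread s) pi yin yout
        ≤ storageProfit (Qout s) (Qin s) (etain s) (Pspread s) pi (xin s) (xout s) := by
  classical
  intro s yin yout ee hfeas
  have hfeas_update : ∀ s', storageFeasible (Qout s') (Qin s') (etain s') (etaout s')
      (Emax s') (Ei s') (Function.update xin s yin s') (Function.update xout s yout s')
      (Function.update e s ee s') := by
    intro s'
    rcases eq_or_ne s' s with rfl | hne
    · simpa using hfeas
    · simpa [Function.update_of_ne hne] using hst s'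
  have hlagrangian := hdual xo _ _ _ hxo hfeas_update
  have hwelfare := storageWelfare_sub_priced_balance P Q Qout Qin etain Pspread pi xo xin xout
  simp only [hbal, mul_zero, Finset.sum_const_zero, sub_zero] at hwelfare
  rw [storageWelfare_sub_priced_balance, hwelfare] at hlagrangian
  have hprofit := Fintype.sum_update₂_sub_sum
    (fun s' => storageProfit (Qout s') (Qin s') (etain s') (Pspread s') pi) xin xout s yin yout
  linarith

/-- Given fixed market prices `π` obtained as optimal duals of
the balance constraints of the market clearing LP with storage orders, any
optimal primal solution also optimally solves the individual profit
maximisation of each storage order `s`. -/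
theorem stmt_4
    (P Q : O → Fin T → ℝ) (Qout Qin : S → Fin T → ℝ)
    (etain etaout Pspread Emax Ei : S → ℝ)
    (hQout : ∀ s t, 0 < Qout s t) (hQin : ∀ s t, Qin s t < 0)
    (hin : ∀ s, etain s ∈ Set.Ioc (0:ℝ) 1) (hout : ∀ s, etaout s ∈ Set.Ioc (0:ℝ) 1)
    (hsp : ∀ s, 0 ≤ Pspread s)
    (xo : O → Fin T → ℝ) (xin xout : S → Fin T → ℝ) (e : S → Fin (T+1) → ℝ)
    (pi : Fin T → ℝ)
    -- primal feasibility
    (hxo : ∀ o t, xo o t ∈ Set.Icc (0:ℝ) 1)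
    (hst : ∀ s, storageFeasible (Qout s) (Qin s) (etain s) (etaout s)
        (Emax s) (Ei s) (xin s) (xout s) (e s))
    (hbal : ∀ t, storageBalance Q Qout Qin etain xo xin xout t = 0)
    -- primal optimality
    (hopt : ∀ (yo : O → Fin T → ℝ) (yin yout : S → Fin T → ℝ)
        (ee : S → Fin (T+1) → ℝ),
      (∀ o t, yo o t ∈ Set.Icc (0:ℝ) 1) →
      (∀ s, storageFeasible (Qout s) (Qin s) (etain s) (etaout s)
          (Emax s) (Ei s) (yin s) (yout s) (ee s)) →
      (∀ t, storageBalance Q Qout Qin etain yo yin yout t = 0) →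
      storageWelfare P Q Qout Pspread yo yout
        ≤ storageWelfare P Q Qout Pspread xo xout)
    -- dual optimality of π: the Lagrangian at π is bounded by the primal optimum
    (hdual : ∀ (yo : O → Fin T → ℝ) (yin yout : S → Fin T → ℝ)
        (ee : S → Fin (T+1) → ℝ),
      (∀ o t, yo o t ∈ Set.Icc (0:ℝ) 1) →
      (∀ s, storageFeasible (Qout s) (Qin s) (etain s) (etaout s)
          (Emax s) (Ei s) (yin s) (yout s) (ee s)) →
      storageWelfare P Q Qout Pspread yo yout
          - ∑ t, pi t * storageBalance Q Qout Qin etain yo yin yout t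
        ≤ storageWelfare P Q Qout Pspread xo xout) :
    ∀ s : S, ∀ (yin yout : Fin T → ℝ) (ee : Fin (T+1) → ℝ),
      storageFeasible (Qout s) (Qin s) (etain s) (etaout s)
          (Emax s) (Ei s) yin yout ee →
      storageProfit (Qout s) (Qin s) (etain s) (Pspread s) pi yin yout
        ≤ storageProfit (Qout s) (Qin s) (etain s) (Pspread s) pi (xin s) (xout s) :=
  stmt_4_general P Q Qout Qin etain etaout Pspread Emax Ei xo xin xout e pi hxo hst hbal hdual

end Storage
end

section
/- Given fixed prices π^g, π^e, π^h obtained as optimal duals of the market clearing LP with a pro-rata constraint linking a gas-to-electricity conversion order and a gas-to-heat conversion order, the optimal primal acceptance ratios x*^{g→e}, x*^{g→h} also solve the individual problem: maximize ((η^{g→e}π^e − π^g) − P^{g→e}) Q^{g→e} x^{g→e} + ((η^{g→h}π^h − π^g) − P^{g→h}) Q^{g→h} x^{g→h} subject to 0 ≤ x^{g→e}, x^{g→h} ≤ 1 and x^{g→e} = x^{g→h}. -/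
open Finset

section ProRata

variable {Og Oe Oh : Type*} [Fintype Og] [Fintype Oe] [Fintype Oh]

theorem stmt_5_general
    (Pg Qg : Og → ℝ) (Pe Qe : Oe → ℝ) (Ph Qh : Oh → ℝ)
    (Qge Qgh : ℝ) (etage etagh : ℝ) (Pge Pgh : ℝ)
    (xg : Og → ℝ) (xe : Oe → ℝ) (xh : Oh → ℝ) (xge xgh : ℝ)
    (pig pie pih : ℝ)
    -- primal feasibility: bounds, pro-rata constraint, balance constraints
    (hxg : ∀ o, xg o ∈ Set.Icc (0:ℝ) 1) (hxe : ∀ o, xe o ∈ Set.Icc (0:ℝ) 1)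
    (hxh : ∀ o, xh o ∈ Set.Icc (0:ℝ) 1)
    (hbg : ∑ o, Qg o * xg o + Qge * xge + Qgh * xgh = 0)
    (hbe : ∑ o, Qe o * xe o - etage * Qge * xge = 0)
    (hbh : ∑ o, Qh o * xh o - etagh * Qgh * xgh = 0)
    -- dual optimality of (πg, πe, πh): Lagrangian bounded by the primal optimum
    (hdual : ∀ (yg : Og → ℝ) (ye : Oe → ℝ) (yh : Oh → ℝ) (yge ygh : ℝ),
      (∀ o, yg o ∈ Set.Icc (0:ℝ) 1) → (∀ o, ye o ∈ Set.Icc (0:ℝ) 1) →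
      (∀ o, yh o ∈ Set.Icc (0:ℝ) 1) →
      yge ∈ Set.Icc (0:ℝ) 1 → ygh ∈ Set.Icc (0:ℝ) 1 → yge = ygh →
      (∑ o, Pg o * Qg o * yg o + ∑ o, Pe o * Qe o * ye o + ∑ o, Ph o * Qh o * yh o
          - Pge * Qge * yge - Pgh * Qgh * ygh)
          - pig * (∑ o, Qg o * yg o + Qge * yge + Qgh * ygh)
          - pie * (∑ o, Qe o * ye o - etage * Qge * yge)
          - pih * (∑ o, Qh o * yh o - etagh * Qgh * ygh)
        ≤ (∑ o, Pg o * Qg o * xg o + ∑ o, Pe o * Qe o * xe o + ∑ o, Ph o * Qh o * xh o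
          - Pge * Qge * xge - Pgh * Qgh * xgh)) :
    -- conclusion: (x*ᵍ→ᵉ, x*ᵍ→ʰ) solves the individual pro-rata problem
    ∀ yge ygh : ℝ, yge ∈ Set.Icc (0:ℝ) 1 → ygh ∈ Set.Icc (0:ℝ) 1 → yge = ygh →
      ((etage * pie - pig) - Pge) * Qge * yge + ((etagh * pih - pig) - Pgh) * Qgh * ygh
        ≤ ((etage * pie - pig) - Pge) * Qge * xge
          + ((etagh * pih - pig) - Pgh) * Qgh * xgh := by
  intro yge ygh hyge hygh hy
  -- Evaluate the Lagrangian at x* with only the conversion orders moved to y; since x* satisfies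
  -- the balance constraints, what remains of the bound is exactly the individual profit comparison.
  have hL := hdual xg xe xh yge ygh hxg hxe hxh hyge hygh hy
  linear_combination hL + pig * hbg + pie * hbe + pih * hbh

/-- Given fixed prices `πg, πe, πh` obtained as optimal duals
of the market clearing LP with a pro-rata constraint linking a
gas-to-electricity conversion order and a gas-to-heat conversion order, the
optimal primal acceptance ratios `x*ᵍ→ᵉ, x*ᵍ→ʰ` also solve the individual
profit maximisation problem of the pro-rata constrained market participant. -/
theorem stmt_5
    (Pg Qg : Og → ℝ) (Pe Qe : Oe → ℝ) (Ph Qh : Oh → ℝ)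
    (Qge Qgh : ℝ) (etage etagh : ℝ) (Pge Pgh : ℝ)
    (hQge : 0 < Qge) (hQgh : 0 < Qgh)
    (xg : Og → ℝ) (xe : Oe → ℝ) (xh : Oh → ℝ) (xge xgh : ℝ)
    (pig pie pih : ℝ)
    -- primal feasibility: bounds, pro-rata constraint, balance constraints
    (hxg : ∀ o, xg o ∈ Set.Icc (0:ℝ) 1) (hxe : ∀ o, xe o ∈ Set.Icc (0:ℝ) 1)
    (hxh : ∀ o, xh o ∈ Set.Icc (0:ℝ) 1)
    (hxge : xge ∈ Set.Icc (0:ℝ) 1) (hxgh : xgh ∈ Set.Icc (0:ℝ) 1)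
    (hpr : xge = xgh)
    (hbg : ∑ o, Qg o * xg o + Qge * xge + Qgh * xgh = 0)
    (hbe : ∑ o, Qe o * xe o - etage * Qge * xge = 0)
    (hbh : ∑ o, Qh o * xh o - etagh * Qgh * xgh = 0)
    -- primal optimality
    (hopt : ∀ (yg : Og → ℝ) (ye : Oe → ℝ) (yh : Oh → ℝ) (yge ygh : ℝ),
      (∀ o, yg o ∈ Set.Icc (0:ℝ) 1) → (∀ o, ye o ∈ Set.Icc (0:ℝ) 1) →
      (∀ o, yh o ∈ Set.Icc (0:ℝ) 1) →
      yge ∈ Set.Icc (0:ℝ) 1 → ygh ∈ Set.Icc (0:ℝ) 1 → yge = ygh →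
      (∑ o, Qg o * yg o + Qge * yge + Qgh * ygh = 0) →
      (∑ o, Qe o * ye o - etage * Qge * yge = 0) →
      (∑ o, Qh o * yh o - etagh * Qgh * ygh = 0) →
      (∑ o, Pg o * Qg o * yg o + ∑ o, Pe o * Qe o * ye o + ∑ o, Ph o * Qh o * yh o
          - Pge * Qge * yge - Pgh * Qgh * ygh)
        ≤ (∑ o, Pg o * Qg o * xg o + ∑ o, Pe o * Qe o * xe o + ∑ o, Ph o * Qh o * xh o
          - Pge * Qge * xge - Pgh * Qgh * xgh))
    -- dual optimality of (πg, πe, πh): Lagrangian bounded by the primal optimum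
    (hdual : ∀ (yg : Og → ℝ) (ye : Oe → ℝ) (yh : Oh → ℝ) (yge ygh : ℝ),
      (∀ o, yg o ∈ Set.Icc (0:ℝ) 1) → (∀ o, ye o ∈ Set.Icc (0:ℝ) 1) →
      (∀ o, yh o ∈ Set.Icc (0:ℝ) 1) →
      yge ∈ Set.Icc (0:ℝ) 1 → ygh ∈ Set.Icc (0:ℝ) 1 → yge = ygh →
      (∑ o, Pg o * Qg o * yg o + ∑ o, Pe o * Qe o * ye o + ∑ o, Ph o * Qh o * yh o
          - Pge * Qge * yge - Pgh * Qgh * ygh)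
          - pig * (∑ o, Qg o * yg o + Qge * yge + Qgh * ygh)
          - pie * (∑ o, Qe o * ye o - etage * Qge * yge)
          - pih * (∑ o, Qh o * yh o - etagh * Qgh * ygh)
        ≤ (∑ o, Pg o * Qg o * xg o + ∑ o, Pe o * Qe o * xe o + ∑ o, Ph o * Qh o * xh o
          - Pge * Qge * xge - Pgh * Qgh * xgh)) :
    -- conclusion: (x*ᵍ→ᵉ, x*ᵍ→ʰ) solves the individual pro-rata problem
    ∀ yge ygh : ℝ, yge ∈ Set.Icc (0:ℝ) 1 → ygh ∈ Set.Icc (0:ℝ) 1 → yge = ygh →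
      ((etage * pie - pig) - Pge) * Qge * yge + ((etagh * pih - pig) - Pgh) * Qgh * ygh
        ≤ ((etage * pie - pig) - Pge) * Qge * xge
          + ((etagh * pih - pig) - Pgh) * Qgh * xgh :=
  stmt_5_general Pg Qg Pe Qe Ph Qh Qge Qgh etage etagh Pge Pgh xg xe xh xge xgh pig pie pih hxg hxe
    hxh hbg hbe hbh hdual

end ProRata
end

section
/- Given fixed prices π^g, π^e, π^h obtained as optimal duals of the market clearing LP with a cumulative constraint x^{g→e} + x^{g→h} ≤ 1 linking gas-to-electricity and gas-to-heat conversion orders of a CHP, the optimal primal acceptance ratios also solve: maximize ((η^{g→e}π^e − π^g) − P^{g→e}) Q x^{g→e} + ((η^{g→h}π^h − π^g) − P^{g→h}) Q x^{g→h} subject to x^{g→e} + x^{g→h} ≤ 1 and x^{g→e}, x^{g→h} ≥ 0. -/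
/-!
At the prices `πg, πe, πh` the Lagrangian of the market clearing LP splits into one surplus
term per order, the conversion orders contributing exactly the CHP's profit. Evaluating the
Lagrangian at the optimal elementary ratios and arbitrary conversion ratios, dual optimality
bounds it by the primal optimum, which equals the Lagrangian at the primal optimum because its
balance constraints vanish. The elementary surpluses cancel, leaving the CHP's profit inequality.
-/

open Finset

section Cumulative

variable {Og Oe Oh : Type*} [Fintype Og] [Fintype Oe] [Fintype Oh]
  (Pg Qg : Og → ℝ) (Pe Qe : Oe → ℝ) (Ph Qh : Oh → ℝ) (Q etage etagh Pge Pgh pig pie pih : ℝ)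

theorem lagrangian_eq_surplus (yg : Og → ℝ) (ye : Oe → ℝ) (yh : Oh → ℝ) (yge ygh : ℝ) :
    (∑ o, Pg o * Qg o * yg o + ∑ o, Pe o * Qe o * ye o + ∑ o, Ph o * Qh o * yh o
        - Pge * Q * yge - Pgh * Q * ygh)
        - pig * (∑ o, Qg o * yg o + Q * yge + Q * ygh)
        - pie * (∑ o, Qe o * ye o - etage * Q * yge)
        - pih * (∑ o, Qh o * yh o - etagh * Q * ygh)
      = (∑ o, (Pg o - pig) * Qg o * yg o + ∑ o, (Pe o - pie) * Qe o * ye o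
          + ∑ o, (Ph o - pih) * Qh o * yh o)
        + (((etage * pie - pig) - Pge) * Q * yge + ((etagh * pih - pig) - Pgh) * Q * ygh) := by
  simp only [sub_mul, sum_sub_distrib, mul_assoc, ← mul_sum]
  ring

variable {Pg Qg Pe Qe Ph Qh Q etage etagh Pge Pgh}

theorem welfare_eq_surplus_of_balanced {xg : Og → ℝ} {xe : Oe → ℝ} {xh : Oh → ℝ} {xge xgh : ℝ}
    (hbg : ∑ o, Qg o * xg o + Q * xge + Q * xgh = 0)
    (hbe : ∑ o, Qe o * xe o - etage * Q * xge = 0)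
    (hbh : ∑ o, Qh o * xh o - etagh * Q * xgh = 0) :
    ∑ o, Pg o * Qg o * xg o + ∑ o, Pe o * Qe o * xe o + ∑ o, Ph o * Qh o * xh o
        - Pge * Q * xge - Pgh * Q * xgh
      = (∑ o, (Pg o - pig) * Qg o * xg o + ∑ o, (Pe o - pie) * Qe o * xe o
          + ∑ o, (Ph o - pih) * Qh o * xh o)
        + (((etage * pie - pig) - Pge) * Q * xge + ((etagh * pih - pig) - Pgh) * Q * xgh) := by
  rw [← lagrangian_eq_surplus, hbg, hbe, hbh]
  ring

theorem stmt_6_general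
    (Pg Qg : Og → ℝ) (Pe Qe : Oe → ℝ) (Ph Qh : Oh → ℝ)
    (Q : ℝ) (etage etagh : ℝ) (Pge Pgh : ℝ)
    (xg : Og → ℝ) (xe : Oe → ℝ) (xh : Oh → ℝ) (xge xgh : ℝ)
    (pig pie pih : ℝ)
    -- primal feasibility: bounds, cumulative constraint, balance constraints
    (hxg : ∀ o, xg o ∈ Set.Icc (0:ℝ) 1) (hxe : ∀ o, xe o ∈ Set.Icc (0:ℝ) 1)
    (hxh : ∀ o, xh o ∈ Set.Icc (0:ℝ) 1)
    (hbg : ∑ o, Qg o * xg o + Q * xge + Q * xgh = 0)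
    (hbe : ∑ o, Qe o * xe o - etage * Q * xge = 0)
    (hbh : ∑ o, Qh o * xh o - etagh * Q * xgh = 0)
    -- dual optimality of (πg, πe, πh): Lagrangian bounded by the primal optimum
    (hdual : ∀ (yg : Og → ℝ) (ye : Oe → ℝ) (yh : Oh → ℝ) (yge ygh : ℝ),
      (∀ o, yg o ∈ Set.Icc (0:ℝ) 1) → (∀ o, ye o ∈ Set.Icc (0:ℝ) 1) →
      (∀ o, yh o ∈ Set.Icc (0:ℝ) 1) →
      0 ≤ yge → 0 ≤ ygh → yge + ygh ≤ 1 →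
      (∑ o, Pg o * Qg o * yg o + ∑ o, Pe o * Qe o * ye o + ∑ o, Ph o * Qh o * yh o
          - Pge * Q * yge - Pgh * Q * ygh)
          - pig * (∑ o, Qg o * yg o + Q * yge + Q * ygh)
          - pie * (∑ o, Qe o * ye o - etage * Q * yge)
          - pih * (∑ o, Qh o * yh o - etagh * Q * ygh)
        ≤ (∑ o, Pg o * Qg o * xg o + ∑ o, Pe o * Qe o * xe o + ∑ o, Ph o * Qh o * xh o
          - Pge * Q * xge - Pgh * Q * xgh)) :
    -- conclusion: (x*ᵍ→ᵉ, x*ᵍ→ʰ) solves the individual cumulative problem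
    ∀ yge ygh : ℝ, 0 ≤ yge → 0 ≤ ygh → yge + ygh ≤ 1 →
      ((etage * pie - pig) - Pge) * Q * yge + ((etagh * pih - pig) - Pgh) * Q * ygh
        ≤ ((etage * pie - pig) - Pge) * Q * xge
          + ((etagh * pih - pig) - Pgh) * Q * xgh := by
  intro yge ygh hyge hygh hy
  have hL := hdual xg xe xh yge ygh hxg hxe hxh hyge hygh hy
  rw [lagrangian_eq_surplus, welfare_eq_surplus_of_balanced (pig := pig) (pie := pie)
    (pih := pih) hbg hbe hbh] at hL
  exact le_of_add_le_add_left hL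

/-- Given fixed prices `πg, πe, πh` obtained as optimal duals
of the market clearing LP with a cumulative constraint `xᵍ→ᵉ + xᵍ→ʰ ≤ 1`
linking the gas-to-electricity and gas-to-heat conversion orders of a CHP with
total conversion capacity `Q > 0`, the optimal primal acceptance ratios also
solve the CHP's individual profit maximisation problem. -/
theorem stmt_6
    (Pg Qg : Og → ℝ) (Pe Qe : Oe → ℝ) (Ph Qh : Oh → ℝ)
    (Q : ℝ) (etage etagh : ℝ) (Pge Pgh : ℝ) (hQ : 0 < Q)
    (xg : Og → ℝ) (xe : Oe → ℝ) (xh : Oh → ℝ) (xge xgh : ℝ)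
    (pig pie pih : ℝ)
    -- primal feasibility: bounds, cumulative constraint, balance constraints
    (hxg : ∀ o, xg o ∈ Set.Icc (0:ℝ) 1) (hxe : ∀ o, xe o ∈ Set.Icc (0:ℝ) 1)
    (hxh : ∀ o, xh o ∈ Set.Icc (0:ℝ) 1)
    (hxge : 0 ≤ xge) (hxgh : 0 ≤ xgh) (hcum : xge + xgh ≤ 1)
    (hbg : ∑ o, Qg o * xg o + Q * xge + Q * xgh = 0)
    (hbe : ∑ o, Qe o * xe o - etage * Q * xge = 0)
    (hbh : ∑ o, Qh o * xh o - etagh * Q * xgh = 0)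
    -- primal optimality
    (hopt : ∀ (yg : Og → ℝ) (ye : Oe → ℝ) (yh : Oh → ℝ) (yge ygh : ℝ),
      (∀ o, yg o ∈ Set.Icc (0:ℝ) 1) → (∀ o, ye o ∈ Set.Icc (0:ℝ) 1) →
      (∀ o, yh o ∈ Set.Icc (0:ℝ) 1) →
      0 ≤ yge → 0 ≤ ygh → yge + ygh ≤ 1 →
      (∑ o, Qg o * yg o + Q * yge + Q * ygh = 0) →
      (∑ o, Qe o * ye o - etage * Q * yge = 0) →
      (∑ o, Qh o * yh o - etagh * Q * ygh = 0) →
      (∑ o, Pg o * Qg o * yg o + ∑ o, Pe o * Qe o * ye o + ∑ o, Ph o * Qh o * yh o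
          - Pge * Q * yge - Pgh * Q * ygh)
        ≤ (∑ o, Pg o * Qg o * xg o + ∑ o, Pe o * Qe o * xe o + ∑ o, Ph o * Qh o * xh o
          - Pge * Q * xge - Pgh * Q * xgh))
    -- dual optimality of (πg, πe, πh): Lagrangian bounded by the primal optimum
    (hdual : ∀ (yg : Og → ℝ) (ye : Oe → ℝ) (yh : Oh → ℝ) (yge ygh : ℝ),
      (∀ o, yg o ∈ Set.Icc (0:ℝ) 1) → (∀ o, ye o ∈ Set.Icc (0:ℝ) 1) →
      (∀ o, yh o ∈ Set.Icc (0:ℝ) 1) →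
      0 ≤ yge → 0 ≤ ygh → yge + ygh ≤ 1 →
      (∑ o, Pg o * Qg o * yg o + ∑ o, Pe o * Qe o * ye o + ∑ o, Ph o * Qh o * yh o
          - Pge * Q * yge - Pgh * Q * ygh)
          - pig * (∑ o, Qg o * yg o + Q * yge + Q * ygh)
          - pie * (∑ o, Qe o * ye o - etage * Q * yge)
          - pih * (∑ o, Qh o * yh o - etagh * Q * ygh)
        ≤ (∑ o, Pg o * Qg o * xg o + ∑ o, Pe o * Qe o * xe o + ∑ o, Ph o * Qh o * xh o
          - Pge * Q * xge - Pgh * Q * xgh)) :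
    -- conclusion: (x*ᵍ→ᵉ, x*ᵍ→ʰ) solves the individual cumulative problem
    ∀ yge ygh : ℝ, 0 ≤ yge → 0 ≤ ygh → yge + ygh ≤ 1 →
      ((etage * pie - pig) - Pge) * Q * yge + ((etagh * pih - pig) - Pgh) * Q * ygh
        ≤ ((etage * pie - pig) - Pge) * Q * xge
          + ((etagh * pih - pig) - Pgh) * Q * xgh :=
  stmt_6_general Pg Qg Pe Qe Ph Qh Q etage etagh Pge Pgh xg xe xh xge xgh pig pie pih hxg hxe hxh
    hbg hbe hbh hdual

end Cumulative
end
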